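/- arXiv:2502.09185 — 5 statements merged into one kernel-verified Lean document; each statement's English description precedes it below -/
import Mathlib

section
/- The expected value of the CUSUM process satisfies E[W_n] = Σ_{k=1}^{n} (1/k) E[S_k^+], where S_k^+ = max(S_k, 0), provided these expectations exist. -/
open MeasureTheory ProbabilityTheory Finset

namespace CusumAux

noncomputable def psum (v : ℕ → ℝ) (j : ℕ) : ℝ := ∑ t ∈ Finset.range j, v t

noncomputable def mx (v : ℕ → ℝ) (m : ℕ) : ℝ :=
  (Finset.range (m+1)).sup' Finset.nonempty_range_add_one (psum v)

lemma sup'_add_const {s : Finset ℕ} (hs : s.Nonempty) (f : ℕ → ℝ) (c : ℝ) :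
    s.sup' hs (fun x => f x + c) = s.sup' hs f + c := by
  apply le_antisymm
  · exact Finset.sup'_le _ _ fun x hx => by
      have := Finset.le_sup' f hx; linarith
  · obtain ⟨x, hx, hfx⟩ := Finset.exists_mem_eq_sup' hs f
    have := Finset.le_sup' (fun x => f x + c) hx
    linarith

lemma sup'_sub_const {s : Finset ℕ} (hs : s.Nonempty) (f : ℕ → ℝ) (c : ℝ) :
    s.sup' hs (fun x => f x - c) = s.sup' hs f - c := by
  have := sup'_add_const hs f (-c)
  simpa [sub_eq_add_neg] using this

lemma const_sub_inf' {s : Finset ℕ} (hs : s.Nonempty) (f : ℕ → ℝ) (c : ℝ) :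
    c - s.inf' hs f = s.sup' hs (fun x => c - f x) := by
  apply le_antisymm
  · obtain ⟨x, hx, hfx⟩ := Finset.exists_mem_eq_inf' hs f
    have := Finset.le_sup' (fun x => c - f x) hx
    linarith [hfx]
  · exact Finset.sup'_le _ _ fun x hx => by
      have := Finset.inf'_le f hx; linarith

lemma sup'_range_shift (U : ℕ → ℝ) (i m : ℕ) :
    (Finset.range (m+1)).sup' Finset.nonempty_range_add_one (fun j => U (i+j))
      = (Finset.Icc i (i+m)).sup' (Finset.nonempty_Icc.2 (Nat.le_add_right i m)) U := by
  apply le_antisymm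
  · apply Finset.sup'_le
    intro j hj
    simp only [Finset.mem_range] at hj
    exact Finset.le_sup' U (by simp only [Finset.mem_Icc]; omega)
  · apply Finset.sup'_le
    intro t ht
    simp only [Finset.mem_Icc] at ht
    have : U t = (fun j => U (i+j)) (t - i) := by congr 1; omega
    rw [this]
    exact Finset.le_sup' (fun j => U (i+j)) (by simp only [Finset.mem_range]; omega)

lemma mx_congr {v v' : ℕ → ℝ} {m : ℕ} (h : ∀ t < m, v t = v' t) : mx v m = mx v' m := by
  unfold mx
  apply Finset.sup'_congr _ rfl
  intro j hj
  simp only [Finset.mem_range] at hj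
  unfold psum
  exact Finset.sum_congr rfl fun t ht => h t (by simp only [Finset.mem_range] at ht; omega)

lemma mx_nonneg (v : ℕ → ℝ) (m : ℕ) : 0 ≤ mx v m := by
  have h := Finset.le_sup' (psum v) (by simp : 0 ∈ Finset.range (m+1))
  simp only [psum, Finset.range_zero, Finset.sum_empty] at h
  exact h

lemma mx_zero (v : ℕ → ℝ) : mx v 0 = 0 := by
  simp [mx, psum]

-- sum over a full cycle of residues
lemma resid_sum (v : ℕ → ℝ) (k m : ℕ) :
    ∑ r ∈ Finset.range k, v ((m + r) % k) = ∑ r ∈ Finset.range k, v (r % k) := by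
  induction m with
  | zero => simp
  | succ m ih =>
    have h1 : ∑ r ∈ Finset.range k, v ((m + 1 + r) % k)
        = ∑ r ∈ Finset.range k, v ((m + (r + 1)) % k) := by
      refine Finset.sum_congr rfl fun r _ => ?_
      have h : m + 1 + r = m + (r + 1) := by omega
      rw [h]
    have h2 : ∑ r ∈ Finset.range (k+1), v ((m + r) % k)
        = (∑ r ∈ Finset.range k, v ((m + (r+1)) % k)) + v ((m + 0) % k) :=
      Finset.sum_range_succ' (fun r => v ((m + r) % k)) k
    have h3 : ∑ r ∈ Finset.range (k+1), v ((m + r) % k)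
        = (∑ r ∈ Finset.range k, v ((m + r) % k)) + v ((m + k) % k) :=
      Finset.sum_range_succ (fun r => v ((m + r) % k)) k
    have h4 : (m + k) % k = (m + 0) % k := by simp [Nat.add_mod_right]
    rw [h1]
    rw [h4] at h3
    linarith [h2, h3, ih]


lemma U_per (v : ℕ → ℝ) (k : ℕ) (m : ℕ) :
    (∑ t ∈ Finset.range (m + k), v (t % k)) = (∑ t ∈ Finset.range m, v (t % k)) + psum v k := by
  rw [Finset.sum_range_add]
  congr 1
  rw [resid_sum]
  unfold psum
  exact Finset.sum_congr rfl fun r hr => by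
    congr 1; exact Nat.mod_eq_of_lt (Finset.mem_range.1 hr)

lemma psum_shift (v : ℕ → ℝ) (k i : ℕ) (j : ℕ) :
    psum (fun t => v ((i + t) % k)) j
      = (∑ t ∈ Finset.range (i + j), v (t % k)) - (∑ t ∈ Finset.range i, v (t % k)) := by
  induction j with
  | zero => simp [psum]
  | succ j ih =>
    unfold psum at ih ⊢
    rw [Finset.sum_range_succ, ih]
    have : i + (j + 1) = (i + j) + 1 := by omega
    rw [this, Finset.sum_range_succ]
    ring

lemma mx_shift (v : ℕ → ℝ) (k i m : ℕ) :
    mx (fun t => v ((i + t) % k)) m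
      = (Finset.Icc i (i+m)).sup' (Finset.nonempty_Icc.2 (Nat.le_add_right i m))
          (fun r => ∑ t ∈ Finset.range r, v (t % k))
        - (∑ t ∈ Finset.range i, v (t % k)) := by
  set U : ℕ → ℝ := fun r => ∑ t ∈ Finset.range r, v (t % k) with hU
  unfold mx
  have h1 : ∀ j ∈ Finset.range (m+1), psum (fun t => v ((i + t) % k)) j = U (i + j) - U i :=
    fun j _ => psum_shift v k i j
  rw [Finset.sup'_congr _ rfl h1, sup'_sub_const, sup'_range_shift]

/-- The cyclic-shift lemma at the heart of Spitzer's identity. -/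
lemma cyclic (v : ℕ → ℝ) (K : ℕ) :
    ∑ i ∈ Finset.range (K+1),
        (mx (fun t => v ((i + t) % (K+1))) (K+1) - mx (fun t => v ((i + t) % (K+1))) K)
      = max (psum v (K+1)) 0 := by
  set k := K + 1 with hk
  set U : ℕ → ℝ := fun r => ∑ t ∈ Finset.range r, v (t % k) with hU
  set s : ℝ := psum v k with hs
  have hUper : ∀ m, U (m + k) = U m + s := fun m => U_per v k m
  set A : ℕ → ℝ := fun i => (Finset.Icc i (i+K)).sup' (Finset.nonempty_Icc.2 (Nat.le_add_right i K)) U with hA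
  set B : ℕ → ℝ := fun i => (Finset.Icc i (i+k)).sup' (Finset.nonempty_Icc.2 (Nat.le_add_right i k)) U with hB
  have hterm : ∀ i, mx (fun t => v ((i + t) % k)) k - mx (fun t => v ((i + t) % k)) K
      = B i - A i := by
    intro i
    rw [mx_shift, mx_shift]
    ring
  rw [Finset.sum_congr rfl (fun i _ => hterm i)]
  have hUA : ∀ i, U i ≤ A i := fun i =>
    Finset.le_sup' U (by simp only [Finset.mem_Icc]; omega)
  have hsplit1 : ∀ i, B i = max (U (i + k)) (A i) := by
    intro i
    have hins : Finset.Icc i (i+k) = insert (i+k) (Finset.Icc i (i+K)) := by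
      ext t; simp only [Finset.mem_Icc, Finset.mem_insert]; omega
    rw [hB]
    simp only [hins]
    rw [Finset.sup'_insert]
  have hsplit2 : ∀ i, B i = max (U i) (A (i+1)) := by
    intro i
    have hins : Finset.Icc i (i+k) = insert i (Finset.Icc (i+1) ((i+1)+K)) := by
      ext t; simp only [Finset.mem_Icc, Finset.mem_insert]; omega
    rw [hB]
    simp only [hins]
    rw [Finset.sup'_insert]
  by_cases hcase : s ≤ 0
  · have hBA : ∀ i, B i = A i := by
      intro i
      rw [hsplit1 i]
      exact max_eq_right (by have := hUA i; have := hUper i; linarith)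
    rw [Finset.sum_congr rfl (fun i _ => by rw [hBA i])]
    simp [max_eq_right hcase]
  · push_neg at hcase
    have hBA : ∀ i, B i = A (i + 1) := by
      intro i
      rw [hsplit2 i]
      refine max_eq_right ?_
      have h1 : U (i + k) ≤ A (i+1) :=
        Finset.le_sup' U (by simp only [Finset.mem_Icc]; omega)
      have := hUper i
      linarith
    have htel : ∑ i ∈ Finset.range k, (B i - A i) = A k - A 0 := by
      rw [Finset.sum_congr rfl (fun i _ => by rw [hBA i])]
      exact Finset.sum_range_sub A k
    rw [htel]
    have hAk : A k = A 0 + s := by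
      simp only [hA]
      rw [← sup'_range_shift U k K, ← sup'_range_shift U 0 K]
      have : ∀ j ∈ Finset.range (K+1), U (k + j) = (fun j => U (0 + j) + s) j := by
        intro j _
        have hkj : k + j = j + k := by omega
        rw [hkj, hUper j]
        simp
      rw [Finset.sup'_congr _ rfl this, sup'_add_const]
    rw [hAk]
    rw [max_eq_left hcase.le]
    ring

/-- Time-reversal identity: the CUSUM equals the running max of reversed increments. -/
lemma W_eq (v : ℕ → ℝ) (n : ℕ) :
    psum v n - (Finset.range (n+1)).inf' Finset.nonempty_range_add_one (psum v)
      = mx (fun t => v (n - 1 - t)) n := by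
  rw [const_sub_inf']
  have key : ∀ j ≤ n, psum (fun t => v (n - 1 - t)) j = psum v n - psum v (n - j) := by
    intro j hj
    unfold psum
    have h1 : ∑ t ∈ Finset.range n, v t - ∑ t ∈ Finset.range (n-j), v t
        = ∑ t ∈ Finset.Ico (n-j) n, v t := by
      rw [Finset.sum_Ico_eq_sub _ (by omega)]
    rw [h1]
    refine Finset.sum_nbij' (i := fun t => n - 1 - t) (j := fun r => n - 1 - r) ?_ ?_ ?_ ?_ ?_
    · intro a ha
      simp only [Finset.mem_range] at ha
      simp only [Finset.mem_Ico]
      omega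
    · intro a ha
      simp only [Finset.mem_Ico] at ha
      simp only [Finset.mem_range]
      omega
    · intro a ha
      simp only [Finset.mem_range] at ha
      show n - 1 - (n - 1 - a) = a
      omega
    · intro a ha
      simp only [Finset.mem_Ico] at ha
      show n - 1 - (n - 1 - a) = a
      omega
    · intro a ha
      rfl
  unfold mx
  apply le_antisymm
  · apply Finset.sup'_le
    intro r hr
    simp only [Finset.mem_range] at hr
    have h3 : psum v n - psum v r = psum (fun t => v (n - 1 - t)) (n - r) := by
      rw [key (n - r) (by omega)]
      congr 2
      omega
    rw [h3]
    exact Finset.le_sup' _ (by simp only [Finset.mem_range]; omega)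
  · apply Finset.sup'_le
    intro j hj
    simp only [Finset.mem_range] at hj
    rw [key j (by omega)]
    exact Finset.le_sup' (fun r => psum v n - psum v r)
      (by simp only [Finset.mem_range]; omega)


/-- Measurability of the `mx` functional on finite vectors. -/
lemma measurable_mxvec (k m : ℕ) :
    Measurable (fun w : Fin k → ℝ => mx (fun t => if h : t < k then w ⟨t, h⟩ else 0) m) := by
  have hrw : (fun w : Fin k → ℝ => mx (fun t => if h : t < k then w ⟨t, h⟩ else 0) m)
      = (Finset.range (m+1)).sup' Finset.nonempty_range_add_one
          (fun j (w : Fin k → ℝ) => ∑ t ∈ Finset.range j, if h : t < k then w ⟨t, h⟩ else 0) := by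
    funext w
    rw [Finset.sup'_apply]
    rfl
  rw [hrw]
  apply Finset.measurable_sup'
  intro j _
  apply Finset.measurable_sum
  intro t _
  by_cases h : t < k
  · simpa [h] using measurable_pi_apply (⟨t, h⟩ : Fin k)
  · simp only [h, dif_neg, not_false_iff]
    exact measurable_const

lemma measurable_mxY {Ω : Type*} [MeasurableSpace Ω] (Y : ℕ → Ω → ℝ)
    (hmeas : ∀ i, Measurable (Y i)) (gidx : ℕ → ℕ) (m : ℕ) :
    Measurable (fun ω => mx (fun t => Y (gidx t) ω) m) := by
  have hrw : (fun ω => mx (fun t => Y (gidx t) ω) m)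
      = (Finset.range (m+1)).sup' Finset.nonempty_range_add_one
          (fun j ω => ∑ t ∈ Finset.range j, Y (gidx t) ω) := by
    funext ω
    rw [Finset.sup'_apply]
    rfl
  rw [hrw]
  apply Finset.measurable_sup'
  intro j _
  exact Finset.measurable_sum _ fun t _ => hmeas (gidx t)

lemma integrable_mxY {Ω : Type*} [MeasurableSpace Ω] (μ : Measure Ω)
    (Y : ℕ → Ω → ℝ) (hmeas : ∀ i, Measurable (Y i)) (hint : ∀ i, Integrable (Y i) μ)
    (gidx : ℕ → ℕ) (m : ℕ) :
    Integrable (fun ω => mx (fun t => Y (gidx t) ω) m) μ := by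
  have hb : Integrable (fun ω => ∑ j ∈ Finset.range (m+1), |∑ t ∈ Finset.range j, Y (gidx t) ω|) μ :=
    integrable_finset_sum _ fun j _ => (integrable_finset_sum _ fun t _ => hint (gidx t)).abs
  refine hb.mono' (measurable_mxY Y hmeas gidx m).aestronglyMeasurable (ae_of_all _ fun ω => ?_)
  rw [Real.norm_eq_abs, abs_of_nonneg (mx_nonneg _ _)]
  unfold mx
  apply Finset.sup'_le
  intro j hj
  calc psum (fun t => Y (gidx t) ω) j ≤ |∑ t ∈ Finset.range j, Y (gidx t) ω| := le_abs_self _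
    _ ≤ ∑ j ∈ Finset.range (m+1), |∑ t ∈ Finset.range j, Y (gidx t) ω| :=
        Finset.single_le_sum (f := fun r => |∑ t ∈ Finset.range r, Y (gidx t) ω|)
          (fun i _ => abs_nonneg _) hj

/-- Joint law of finitely many of the `Y`'s along an injection is the product measure. -/
lemma map_pi {Ω : Type*} [MeasurableSpace Ω] (μ : Measure Ω) [IsProbabilityMeasure μ]
    (Y : ℕ → Ω → ℝ) (hmeas : ∀ i, Measurable (Y i))
    (hindep : iIndepFun Y μ)
    (hident : ∀ i, Measure.map (Y i) μ = Measure.map (Y 0) μ)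
    (k : ℕ) (g : Fin k → ℕ) (hg : Function.Injective g) :
    Measure.map (fun ω (j : Fin k) => Y (g j) ω) μ
      = Measure.pi (fun _ => Measure.map (Y 0) μ) := by
  classical
  have hivec : Measurable (fun ω (j : Fin k) => Y (g j) ω) :=
    measurable_pi_lambda _ fun j => hmeas (g j)
  have hprob : IsProbabilityMeasure (Measure.map (Y 0) μ) :=
    Measure.isProbabilityMeasure_map (hmeas 0).aemeasurable
  refine (Measure.pi_eq fun s hs => ?_).symm
  rw [Measure.map_apply hivec (MeasurableSet.univ_pi hs)]
  set sets : ℕ → Set ℝ := fun i => if h : ∃ j, g j = i then s h.choose else Set.univ with hsets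
  have hsets_g : ∀ j : Fin k, sets (g j) = s j := by
    intro j
    have h : ∃ j', g j' = g j := ⟨j, rfl⟩
    simp only [hsets, dif_pos h]
    exact congrArg s (hg h.choose_spec)
  have hpre : (fun ω (j : Fin k) => Y (g j) ω) ⁻¹' (Set.pi Set.univ s)
      = ⋂ i ∈ Finset.image g Finset.univ, Y i ⁻¹' sets i := by
    ext ω
    simp only [Set.mem_preimage, Set.mem_pi, Set.mem_univ, forall_true_left, Set.mem_iInter,
      Finset.mem_image, Finset.mem_univ, true_and]
    constructor
    · rintro h i ⟨j, rfl⟩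
      rw [hsets_g j]; exact h j
    · intro h j
      have := h (g j) ⟨j, rfl⟩
      rwa [hsets_g j] at this
  rw [hpre]
  have hmeas_sets : ∀ i, i ∈ Finset.image g Finset.univ → MeasurableSet (sets i) := by
    intro i _
    by_cases h : ∃ j, g j = i
    · simp only [hsets, dif_pos h]; exact hs _
    · simp only [hsets, dif_neg h]; exact MeasurableSet.univ
  rw [hindep.measure_inter_preimage_eq_mul _ hmeas_sets]
  rw [Finset.prod_image (fun a _ b _ h => hg h)]
  apply Finset.prod_congr rfl
  intro j _
  rw [hsets_g j, ← hident (g j), Measure.map_apply (hmeas (g j)) (hs j)]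

/-- Transfer of integrals between two injective index choices. -/
lemma transfer {Ω : Type*} [MeasurableSpace Ω] (μ : Measure Ω) [IsProbabilityMeasure μ]
    (Y : ℕ → Ω → ℝ) (hmeas : ∀ i, Measurable (Y i))
    (hindep : iIndepFun Y μ)
    (hident : ∀ i, Measure.map (Y i) μ = Measure.map (Y 0) μ)
    (k : ℕ) (g g' : Fin k → ℕ) (hg : Function.Injective g) (hg' : Function.Injective g')
    (f : (Fin k → ℝ) → ℝ) (hf : Measurable f) :
    ∫ ω, f (fun j => Y (g j) ω) ∂μ = ∫ ω, f (fun j => Y (g' j) ω) ∂μ := by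
  have h1 : Measurable (fun ω (j : Fin k) => Y (g j) ω) :=
    measurable_pi_lambda _ fun j => hmeas (g j)
  have h2 : Measurable (fun ω (j : Fin k) => Y (g' j) ω) :=
    measurable_pi_lambda _ fun j => hmeas (g' j)
  have e1 : ∫ ω, f (fun j => Y (g j) ω) ∂μ
      = ∫ x, f x ∂(Measure.map (fun ω (j : Fin k) => Y (g j) ω) μ) :=
    (integral_map h1.aemeasurable hf.aestronglyMeasurable).symm
  have e2 : ∫ ω, f (fun j => Y (g' j) ω) ∂μ
      = ∫ x, f x ∂(Measure.map (fun ω (j : Fin k) => Y (g' j) ω) μ) :=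
    (integral_map h2.aemeasurable hf.aestronglyMeasurable).symm
  rw [e1, e2, map_pi μ Y hmeas hindep hident k g hg, map_pi μ Y hmeas hindep hident k g' hg']

noncomputable def Gm (k m : ℕ) : (Fin k → ℝ) → ℝ :=
  fun w => mx (fun t => if h : t < k then w ⟨t, h⟩ else 0) m

lemma Gm_apply {Ω : Type*} (Y : ℕ → Ω → ℝ) (gidx : ℕ → ℕ) (k m : ℕ) (hmk : m ≤ k) (ω : Ω) :
    Gm k m (fun j : Fin k => Y (gidx (j : ℕ)) ω) = mx (fun t => Y (gidx t) ω) m := by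
  unfold Gm
  apply mx_congr
  intro t ht
  have h : t < k := lt_of_lt_of_le ht hmk
  simp [h]

end CusumAux

open CusumAux in
/-- Spitzer-type identity for the mean of the CUSUM process:
`E W_n = ∑_{k=1}^n (1/k) E S_k⁺`, where `W_n = S_n - min_{0 ≤ k ≤ n} S_k`
and `S_k⁺ = max (S_k) 0`, for i.i.d. integrable increments. -/
theorem cusum_mean_spitzer
    {Ω : Type*} [MeasurableSpace Ω] (μ : Measure Ω) [IsProbabilityMeasure μ]
    (Y : ℕ → Ω → ℝ) (hmeas : ∀ i, Measurable (Y i))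
    (hindep : iIndepFun Y μ)
    (hident : ∀ i, Measure.map (Y i) μ = Measure.map (Y 0) μ)
    (hint : ∀ i, Integrable (Y i) μ)
    (S : ℕ → Ω → ℝ) (hS : ∀ n ω, S n ω = ∑ i ∈ Finset.range n, Y i ω)
    (n : ℕ) :
    ∫ ω, (S n ω -
        (Finset.range (n + 1)).inf' Finset.nonempty_range_add_one (fun k => S k ω)) ∂μ =
      ∑ k ∈ Finset.Icc 1 n, (1 / (k : ℝ)) * ∫ ω, max (S k ω) 0 ∂μ := by
  classical
  have hT_int : ∀ (gidx : ℕ → ℕ) (m : ℕ),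
      Integrable (fun ω => mx (fun t => Y (gidx t) ω) m) μ :=
    fun gidx m => integrable_mxY μ Y hmeas hint gidx m
  -- Step: Spitzer increment identity
  have step : ∀ K : ℕ,
      ∫ ω, max (S (K+1) ω) 0 ∂μ
        = ((K : ℝ) + 1) * (∫ ω, mx (fun i => Y i ω) (K+1) ∂μ
            - ∫ ω, mx (fun i => Y i ω) K ∂μ) := by
    intro K
    set k := K + 1 with hk
    have hpt : ∀ ω, ∑ i ∈ Finset.range k,
        (mx (fun t => Y ((i + t) % k) ω) k - mx (fun t => Y ((i + t) % k) ω) K)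
        = max (S k ω) 0 := by
      intro ω
      rw [hS k ω]
      exact cyclic (fun t => Y t ω) K
    have hint_i : ∀ i : ℕ, Integrable (fun ω =>
        mx (fun t => Y ((i + t) % k) ω) k - mx (fun t => Y ((i + t) % k) ω) K) μ :=
      fun i => (hT_int (fun t => (i + t) % k) k).sub (hT_int (fun t => (i + t) % k) K)
    have h1 : ∫ ω, max (S k ω) 0 ∂μ
        = ∑ i ∈ Finset.range k, ∫ ω, (mx (fun t => Y ((i + t) % k) ω) k
            - mx (fun t => Y ((i + t) % k) ω) K) ∂μ := by
      rw [← integral_finset_sum _ (fun i _ => hint_i i)]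
      exact integral_congr_ae (ae_of_all _ fun ω => (hpt ω).symm)
    have h2 : ∀ i ∈ Finset.range k, ∫ ω, (mx (fun t => Y ((i + t) % k) ω) k
            - mx (fun t => Y ((i + t) % k) ω) K) ∂μ
        = ∫ ω, mx (fun t => Y t ω) k ∂μ - ∫ ω, mx (fun t => Y t ω) K ∂μ := by
      intro i _
      have hgi : Function.Injective (fun j : Fin k => (i + (j : ℕ)) % k) := by
        intro a b hab
        simp only at hab
        have hmod : (a : ℕ) ≡ (b : ℕ) [MOD k] :=
          Nat.ModEq.add_left_cancel' i hab
        have ha := a.2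
        have hb := b.2
        have : (a : ℕ) = (b : ℕ) := by
          have := hmod
          unfold Nat.ModEq at this
          rwa [Nat.mod_eq_of_lt ha, Nat.mod_eq_of_lt hb] at this
        exact Fin.ext this
      have hgi' : Function.Injective (fun j : Fin k => (j : ℕ)) := Fin.val_injective
      have hfmeas : Measurable (fun w : Fin k → ℝ => Gm k k w - Gm k K w) :=
        (measurable_mxvec k k).sub (measurable_mxvec k K)
      have e1 : (fun ω => mx (fun t => Y ((i + t) % k) ω) k
            - mx (fun t => Y ((i + t) % k) ω) K)
          = fun ω => (fun w => Gm k k w - Gm k K w)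
              (fun j : Fin k => Y ((fun t => (i + t) % k) (j : ℕ)) ω) := by
        funext ω
        simp only
        rw [Gm_apply Y (fun t => (i + t) % k) k k le_rfl ω,
          Gm_apply Y (fun t => (i + t) % k) k K (by omega) ω]
      have e2 : (fun ω => mx (fun t => Y t ω) k - mx (fun t => Y t ω) K)
          = fun ω => (fun w => Gm k k w - Gm k K w)
              (fun j : Fin k => Y ((fun t => t) (j : ℕ)) ω) := by
        funext ω
        simp only
        rw [Gm_apply Y (fun t => t) k k le_rfl ω, Gm_apply Y (fun t => t) k K (by omega) ω]
      calc ∫ ω, (mx (fun t => Y ((i + t) % k) ω) k - mx (fun t => Y ((i + t) % k) ω) K) ∂μ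
          = ∫ ω, (fun w => Gm k k w - Gm k K w)
              (fun j : Fin k => Y ((i + (j : ℕ)) % k) ω) ∂μ := by rw [e1]
        _ = ∫ ω, (fun w => Gm k k w - Gm k K w) (fun j : Fin k => Y (j : ℕ) ω) ∂μ :=
            transfer μ Y hmeas hindep hident k _ _ hgi hgi' _ hfmeas
        _ = ∫ ω, (mx (fun t => Y t ω) k - mx (fun t => Y t ω) K) ∂μ := by rw [e2]
        _ = ∫ ω, mx (fun t => Y t ω) k ∂μ - ∫ ω, mx (fun t => Y t ω) K ∂μ :=
            integral_sub (hT_int (fun t => t) k) (hT_int (fun t => t) K)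
    rw [h1, Finset.sum_congr rfl h2, Finset.sum_const, Finset.card_range]
    simp only [nsmul_eq_mul]
    push_cast
    rw [hk]; push_cast
    ring
  -- Reversal: E W_n = E T_n
  have hW : ∫ ω, (S n ω -
        (Finset.range (n + 1)).inf' Finset.nonempty_range_add_one (fun k => S k ω)) ∂μ
      = ∫ ω, mx (fun i => Y i ω) n ∂μ := by
    have hpt : ∀ ω, S n ω -
        (Finset.range (n + 1)).inf' Finset.nonempty_range_add_one (fun k => S k ω)
        = mx (fun t => Y (n - 1 - t) ω) n := by
      intro ω
      have hc : (Finset.range (n + 1)).inf' Finset.nonempty_range_add_one (fun k => S k ω)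
          = (Finset.range (n + 1)).inf' Finset.nonempty_range_add_one (psum (fun i => Y i ω)) :=
        Finset.inf'_congr _ rfl fun k _ => hS k ω
      rw [hS n ω, hc]
      exact W_eq (fun i => Y i ω) n
    rw [integral_congr_ae (ae_of_all _ hpt)]
    have hg : Function.Injective (fun j : Fin n => n - 1 - (j : ℕ)) := by
      intro a b hab
      simp only at hab
      have ha := a.2
      have hb := b.2
      exact Fin.ext (by omega)
    have hg' : Function.Injective (fun j : Fin n => (j : ℕ)) := Fin.val_injective
    have e1 : (fun ω => mx (fun t => Y (n - 1 - t) ω) n)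
        = fun ω => Gm n n (fun j : Fin n => Y ((fun t => n - 1 - t) (j : ℕ)) ω) := by
      funext ω
      rw [Gm_apply Y (fun t => n - 1 - t) n n le_rfl ω]
    have e2 : (fun ω => mx (fun t => Y t ω) n)
        = fun ω => Gm n n (fun j : Fin n => Y ((fun t => t) (j : ℕ)) ω) := by
      funext ω
      rw [Gm_apply Y (fun t => t) n n le_rfl ω]
    calc ∫ ω, mx (fun t => Y (n - 1 - t) ω) n ∂μ
        = ∫ ω, Gm n n (fun j : Fin n => Y (n - 1 - (j : ℕ)) ω) ∂μ := by rw [e1]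
      _ = ∫ ω, Gm n n (fun j : Fin n => Y (j : ℕ) ω) ∂μ :=
          transfer μ Y hmeas hindep hident n _ _ hg hg' _ (measurable_mxvec n n)
      _ = ∫ ω, mx (fun t => Y t ω) n ∂μ := by rw [e2]
  -- Telescoping
  have htel : ∀ m : ℕ, ∫ ω, mx (fun i => Y i ω) m ∂μ
      = ∑ k ∈ Finset.Icc 1 m, (1 / (k : ℝ)) * ∫ ω, max (S k ω) 0 ∂μ := by
    intro m
    induction m with
    | zero =>
      have : (fun ω => mx (fun i => Y i ω) 0) = fun _ => (0 : ℝ) := by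
        funext ω; exact mx_zero _
      rw [this]
      simp
    | succ m ih =>
      have hstep := step m
      have hIcc : Finset.Icc 1 (m+1) = insert (m+1) (Finset.Icc 1 m) := by
        ext t; simp only [Finset.mem_Icc, Finset.mem_insert]; omega
      rw [hIcc, Finset.sum_insert (by simp only [Finset.mem_Icc]; omega), ← ih, hstep]
      have hm1 : ((m : ℝ) + 1) ≠ 0 := by positivity
      push_cast
      field_simp
      ring
  rw [hW, htel n]
end

section
/- Under the condition E[e^Y] = 1, the exponential moment of the CUSUM process satisfies the linear upper bound E[e^{W_n}] ≤ 1 + n·E[(1 − e^Y)^+] for all n ≥ 1. -/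
open MeasureTheory ProbabilityTheory Real Finset

/-- Linear upper bound for the exponential moment of the CUSUM process:
under `E e^Y = 1`, `E e^{W_n} ≤ 1 + n · E (1 - e^Y)⁺` for all `n ≥ 1`. -/
theorem cusum_exp_moment_upper_bound
    {Ω : Type*} [MeasurableSpace Ω] (μ : Measure Ω) [IsProbabilityMeasure μ]
    (Y : ℕ → Ω → ℝ) (hmeas : ∀ i, Measurable (Y i))
    (hindep : iIndepFun (m := fun _ => Real.measurableSpace) Y μ)
    (hident : ∀ i, Measure.map (Y i) μ = Measure.map (Y 0) μ)
    (hexp_int : ∀ i, Integrable (fun ω => exp (Y i ω)) μ)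
    (hexp_one : ∀ i, ∫ ω, exp (Y i ω) ∂μ = 1)
    (W : ℕ → Ω → ℝ) (hW0 : ∀ ω, W 0 ω = 0)
    (hWrec : ∀ n ω, W (n + 1) ω = max (W n ω + Y (n + 1) ω) 0)
    (n : ℕ) (hn : 1 ≤ n)
    (hWint : Integrable (fun ω => exp (W n ω)) μ) :
    ∫ ω, exp (W n ω) ∂μ ≤
      1 + (n : ℝ) * ∫ ω, max (1 - exp (Y 1 ω)) 0 ∂μ := by
  -- notation
  set c : ℝ := ∫ ω, max (1 - exp (Y 1 ω)) 0 ∂μ with hc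
  -- measurability of W
  have hWmeas : ∀ m, Measurable (W m) := by
    intro m
    induction m with
    | zero =>
      have : W 0 = fun _ => 0 := funext hW0
      rw [this]; exact measurable_const
    | succ m ih =>
      have : W (m + 1) = fun ω => max (W m ω + Y (m + 1) ω) 0 := funext (hWrec m)
      rw [this]; exact (ih.add (hmeas (m + 1))).max measurable_const
  -- nonnegativity of W
  have hWnonneg : ∀ m ω, 0 ≤ W m ω := by
    intro m ω
    cases m with
    | zero => rw [hW0]
    | succ m => rw [hWrec]; exact le_max_right _ _
  -- W m is a measurable function of (Y i)_{i ∈ Icc 1 m}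
  have key : ∀ m, ∃ g : ((Finset.Icc 1 m : Finset ℕ) → ℝ) → ℝ,
      Measurable g ∧ ∀ ω, W m ω = g (fun i => Y i ω) := by
    intro m
    induction m with
    | zero =>
      exact ⟨fun _ => 0, measurable_const, fun ω => hW0 ω⟩
    | succ m ih =>
      obtain ⟨g, hg, hgW⟩ := ih
      have hmem : ∀ i : (Finset.Icc 1 m : Finset ℕ), (i : ℕ) ∈ Finset.Icc 1 (m + 1) := by
        rintro ⟨i, hi⟩
        simp only [Finset.mem_Icc] at hi ⊢
        omega
      have hmem' : (m + 1) ∈ Finset.Icc 1 (m + 1) := by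
        simp only [Finset.mem_Icc]; omega
      refine ⟨fun x => max (g (fun i => x ⟨i, hmem i⟩) + x ⟨m + 1, hmem'⟩) 0, ?_, ?_⟩
      · exact ((hg.comp (measurable_pi_lambda _ fun i => measurable_pi_apply _)).add
          (measurable_pi_apply _)).max measurable_const
      · intro ω
        rw [hWrec, hgW]
  -- independence of exp (W m) and exp (Y (m+1))
  have hind : ∀ m, IndepFun (fun ω => exp (W m ω)) (fun ω => exp (Y (m + 1) ω)) μ := by
    intro m
    obtain ⟨g, hg, hgW⟩ := key m
    have hdisj : Disjoint (Finset.Icc 1 m) ({m + 1} : Finset ℕ) := by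
      simp only [Finset.disjoint_left, Finset.mem_Icc, Finset.mem_singleton]
      omega
    have h1 := hindep.indepFun_finset (Finset.Icc 1 m) {m + 1} hdisj hmeas
    have hmem' : (m + 1) ∈ ({m + 1} : Finset ℕ) := Finset.mem_singleton_self _
    have h2 := h1.comp (φ := fun x => exp (g x))
      (ψ := fun x : (({m + 1} : Finset ℕ) : Finset ℕ) → ℝ => exp (x ⟨m + 1, hmem'⟩))
      (Real.measurable_exp.comp hg) (Real.measurable_exp.comp (measurable_pi_apply _))
    have e1 : (fun x => exp (g x)) ∘ (fun a (i : (Finset.Icc 1 m : Finset ℕ)) => Y i a)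
        = fun ω => exp (W m ω) := by
      funext ω; simp [Function.comp, hgW ω]
    have e2 : (fun x : (({m + 1} : Finset ℕ) : Finset ℕ) → ℝ => exp (x ⟨m + 1, hmem'⟩)) ∘
        (fun a (i : (({m + 1} : Finset ℕ) : Finset ℕ)) => Y i a)
        = fun ω => exp (Y (m + 1) ω) := by
      funext ω; simp [Function.comp]
    rwa [e1, e2] at h2
  -- the constant c is the same for all indices, nonnegative, and integrable
  have hf_meas : Measurable (fun t : ℝ => max (1 - exp t) 0) :=
    ((measurable_const.sub Real.measurable_exp)).max measurable_const
  have hc_i : ∀ i, ∫ ω, max (1 - exp (Y i ω)) 0 ∂μ = c := by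
    intro i
    have h1 : ∫ ω, max (1 - exp (Y i ω)) 0 ∂μ
        = ∫ t, max (1 - exp t) 0 ∂(Measure.map (Y i) μ) := by
      rw [integral_map (hmeas i).aemeasurable hf_meas.aestronglyMeasurable]
    have h2 : c = ∫ t, max (1 - exp t) 0 ∂(Measure.map (Y 1) μ) := by
      rw [hc, integral_map (hmeas 1).aemeasurable hf_meas.aestronglyMeasurable]
    rw [h1, h2, hident i, hident 1]
  have hc_int : ∀ i, Integrable (fun ω => max (1 - exp (Y i ω)) 0) μ := by
    intro i
    refine Integrable.mono' (integrable_const (1 : ℝ))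
      (hf_meas.comp (hmeas i)).aestronglyMeasurable (ae_of_all _ fun ω => ?_)
    rw [Real.norm_eq_abs, abs_of_nonneg (le_max_right _ _)]
    apply max_le _ zero_le_one
    have := Real.exp_pos (Y i ω)
    linarith
  have hc_nonneg : 0 ≤ c := by
    rw [hc]
    exact integral_nonneg fun ω => le_max_right _ _
  -- main induction
  have main : ∀ m, Integrable (fun ω => exp (W m ω)) μ ∧
      ∫ ω, exp (W m ω) ∂μ ≤ 1 + (m : ℝ) * c := by
    intro m
    induction m with
    | zero =>
      have h0 : (fun ω => exp (W 0 ω)) = fun _ : Ω => (1 : ℝ) := by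
        funext ω; rw [hW0]; exact Real.exp_zero
      rw [h0]
      simp
    | succ m ih =>
      obtain ⟨hint, hbound⟩ := ih
      have hprod_int : Integrable (fun ω => exp (W m ω) * exp (Y (m + 1) ω)) μ :=
        (hind m).integrable_mul hint (hexp_int (m + 1))
      have hpt : ∀ ω, exp (W (m + 1) ω) ≤
          exp (W m ω) * exp (Y (m + 1) ω) + max (1 - exp (Y (m + 1) ω)) 0 := by
        intro ω
        rw [hWrec]
        have hA : (1 : ℝ) ≤ exp (W m ω) := by
          rw [← Real.exp_zero]; exact Real.exp_le_exp.2 (hWnonneg m ω)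
        have hB : (0 : ℝ) < exp (Y (m + 1) ω) := Real.exp_pos _
        have hmax : exp (max (W m ω + Y (m + 1) ω) 0)
            = max (exp (W m ω) * exp (Y (m + 1) ω)) 1 := by
          rw [Real.exp_monotone.map_max, Real.exp_add, Real.exp_zero]
        rw [hmax]
        apply max_le
        · nlinarith [le_max_right (1 - exp (Y (m + 1) ω)) (0 : ℝ)]
        · nlinarith [le_max_left (1 - exp (Y (m + 1) ω)) (0 : ℝ)]
      have hWint' : Integrable (fun ω => exp (W (m + 1) ω)) μ := by
        refine Integrable.mono' (hprod_int.add (hc_int (m + 1)))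
          (Real.measurable_exp.comp (hWmeas (m + 1))).aestronglyMeasurable
          (ae_of_all _ fun ω => ?_)
        rw [Real.norm_eq_abs, abs_of_nonneg (Real.exp_pos _).le]
        exact hpt ω
      refine ⟨hWint', ?_⟩
      have hmul : ∫ ω, exp (W m ω) * exp (Y (m + 1) ω) ∂μ
          = (∫ ω, exp (W m ω) ∂μ) * ∫ ω, exp (Y (m + 1) ω) ∂μ := by
        have := (hind m).integral_mul_eq_mul_integral hint.1 (hexp_int (m + 1)).1
        simpa [Pi.mul_apply] using this
      calc ∫ ω, exp (W (m + 1) ω) ∂μ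
          ≤ ∫ ω, (exp (W m ω) * exp (Y (m + 1) ω) + max (1 - exp (Y (m + 1) ω)) 0) ∂μ :=
            integral_mono hWint' (hprod_int.add (hc_int (m + 1))) hpt
        _ = (∫ ω, exp (W m ω) ∂μ) * (∫ ω, exp (Y (m + 1) ω) ∂μ) + c := by
            rw [integral_add hprod_int (hc_int (m + 1)), hmul, hc_i (m + 1)]
        _ = (∫ ω, exp (W m ω) ∂μ) + c := by rw [hexp_one (m + 1), mul_one]
        _ ≤ 1 + (m : ℝ) * c + c := by linarith
        _ = 1 + ((m + 1 : ℕ) : ℝ) * c := by push_cast; ring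
  exact (main n).2
end

section
/- Under the condition E[e^Y] = 1, combining Doob's inequality with the compensator bound yields P(max_{0 ≤ t ≤ n} W_t ≥ h) ≤ min(e^{-h}(1 + n·E[(1 − e^Y)^+]), 1) for all h > 0 and n ≥ 1. -/
open MeasureTheory ProbabilityTheory Real Finset

/-- Combining Doob's maximal inequality with the compensator bound:
under `E e^Y = 1`, for all `h > 0` and `n ≥ 1`,
`P(max_{0 ≤ t ≤ n} W_t ≥ h) ≤ min (e^{-h}(1 + n · E (1 - e^Y)⁺)) 1`. -/
theorem cusum_false_alarm_bound
    {Ω : Type*} [MeasurableSpace Ω] (μ : Measure Ω) [IsProbabilityMeasure μ]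
    (Y : ℕ → Ω → ℝ) (hmeas : ∀ i, Measurable (Y i))
    (hindep : iIndepFun (m := fun _ => Real.measurableSpace) Y μ)
    (hident : ∀ i, Measure.map (Y i) μ = Measure.map (Y 0) μ)
    (hexp_int : ∀ i, Integrable (fun ω => exp (Y i ω)) μ)
    (hexp_one : ∀ i, ∫ ω, exp (Y i ω) ∂μ = 1)
    (W : ℕ → Ω → ℝ) (hW0 : ∀ ω, W 0 ω = 0)
    (hWrec : ∀ n ω, W (n + 1) ω = max (W n ω + Y (n + 1) ω) 0)
    (h : ℝ) (hh : 0 < h) (n : ℕ) (hn : 1 ≤ n) :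
    μ {ω | h ≤ (Finset.range (n + 1)).sup' Finset.nonempty_range_add_one
        (fun k => W k ω)} ≤
      ENNReal.ofReal
        (min (exp (-h) * (1 + (n : ℝ) * ∫ ω, max (1 - exp (Y 1 ω)) 0 ∂μ)) 1) := by
  classical
  -- measurability and nonnegativity of W
  have hWmeas : ∀ k, Measurable (W k) := by
    intro k; induction k with
    | zero =>
        have hW : W 0 = fun _ => (0 : ℝ) := funext hW0
        rw [hW]; exact measurable_const
    | succ k ih =>
        have hW : W (k + 1) = fun ω => max (W k ω + Y (k + 1) ω) 0 := funext (hWrec k)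
        rw [hW]; exact (ih.add (hmeas _)).max measurable_const
  have hWnonneg : ∀ k ω, 0 ≤ W k ω := by
    intro k ω
    cases k with
    | zero => rw [hW0]
    | succ k => rw [hWrec]; exact le_max_right _ _
  set c : ℝ := ∫ ω, max (1 - exp (Y 1 ω)) 0 ∂μ with hc
  have hgm : Measurable fun x : ℝ => max (1 - exp x) 0 :=
    (measurable_const.sub Real.measurable_exp).max measurable_const
  have hgint : ∀ i, Integrable (fun ω => max (1 - exp (Y i ω)) 0) μ := by
    intro i
    refine Integrable.mono' (integrable_const 1)
      ((hgm.comp (hmeas i)).aestronglyMeasurable) ?_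
    refine Filter.Eventually.of_forall fun ω => ?_
    rw [Real.norm_eq_abs, abs_of_nonneg (le_max_right _ _)]
    refine max_le ?_ zero_le_one
    have := Real.exp_pos (Y i ω); linarith
  have hgc : ∀ i : ℕ, (∫ ω, max (1 - exp (Y (i + 1) ω)) 0 ∂μ) = c := by
    intro i
    have h1 : ∀ j : ℕ, (∫ ω, max (1 - exp (Y j ω)) 0 ∂μ)
        = ∫ x, max (1 - exp x) 0 ∂(Measure.map (Y j) μ) := fun j =>
      (integral_map (hmeas j).aemeasurable hgm.aestronglyMeasurable).symm
    rw [hc, h1, h1, hident (i + 1), hident 1]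
  have hcnonneg : 0 ≤ c := integral_nonneg fun ω => le_max_right _ _
  -- the natural filtration of Y
  set 𝒢 : Filtration ℕ (inferInstance : MeasurableSpace Ω) :=
    Filtration.natural Y (fun i => (hmeas i).stronglyMeasurable) with h𝒢
  have hcomap_le : ∀ {j i : ℕ}, j ≤ i →
      MeasurableSpace.comap (Y j) Real.measurableSpace ≤ 𝒢 i := by
    intro j i hj
    exact le_iSup₂ (f := fun j (_ : j ≤ i) =>
      MeasurableSpace.comap (Y j) Real.measurableSpace) j hj
  -- W is adapted
  have hWadapt : ∀ k, Measurable[𝒢 k] (W k) := by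
    intro k; induction k with
    | zero =>
        have hW : W 0 = fun _ => (0 : ℝ) := funext hW0
        rw [hW]; exact measurable_const
    | succ k ih =>
        have hW : W (k + 1) = fun ω => max (W k ω + Y (k + 1) ω) 0 := funext (hWrec k)
        rw [hW]
        have h1 : Measurable[𝒢 (k + 1)] (W k) := ih.mono (𝒢.mono (Nat.le_succ k)) le_rfl
        have h2 : Measurable[𝒢 (k + 1)] (Y (k + 1)) :=
          (Measurable.of_comap_le le_rfl).mono (hcomap_le le_rfl) le_rfl
        exact (h1.add h2).max measurable_const
  -- the exponential process
  set f : ℕ → Ω → ℝ := fun k ω => exp (W k ω) with hf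
  have hfadapt : StronglyAdapted 𝒢 f := fun k =>
    Real.continuous_exp.comp_stronglyMeasurable (hWadapt k).stronglyMeasurable
  have hfpos : ∀ k ω, 0 < f k ω := fun k ω => Real.exp_pos _
  have hfone : ∀ k ω, 1 ≤ f k ω := fun k ω => Real.one_le_exp (hWnonneg k ω)
  have hf0 : f 0 = fun _ => (1 : ℝ) := by
    funext ω; simp only [hf]; rw [hW0 ω, Real.exp_zero]
  have hfrec : ∀ k ω, f (k + 1) ω = max (f k ω * exp (Y (k + 1) ω)) 1 := by
    intro k ω
    simp only [hf]
    rw [hWrec k ω, Real.exp_monotone.map_max, Real.exp_add, Real.exp_zero]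
  -- independence of 𝒢 k and Y (k+1)
  have hIndep : ∀ k, Indep (𝒢 k)
      (MeasurableSpace.comap (Y (k + 1)) Real.measurableSpace) μ := by
    intro k
    have hiI : iIndep (fun i => MeasurableSpace.comap (Y i) Real.measurableSpace) μ :=
      (iIndepFun_iff_iIndep _ _ _).mp hindep
    have h_le : ∀ i, MeasurableSpace.comap (Y i) Real.measurableSpace ≤
        (inferInstance : MeasurableSpace Ω) := fun i => (hmeas i).comap_le
    have hbig := indep_biSup_compl h_le hiI (Set.Iic k)
    refine indep_of_indep_of_le_right hbig ?_
    exact le_iSup₂ (f := fun i (_ : i ∈ (Set.Iic k)ᶜ) =>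
      MeasurableSpace.comap (Y i) Real.measurableSpace) (k + 1) (by simp)
  have hIndepFk : ∀ k, IndepFun (f k) (fun ω => exp (Y (k + 1) ω)) μ := by
    intro k
    rw [IndepFun_iff_Indep]
    refine indep_of_indep_of_le_left (indep_of_indep_of_le_right (hIndep k) ?_) ?_
    · exact Measurable.comap_le ((Measurable.of_comap_le le_rfl).exp)
    · exact ((hfadapt k).measurable).comap_le
  -- integrability of f k
  have hfint : ∀ k, Integrable (f k) μ := by
    intro k; induction k with
    | zero => rw [hf0]; exact integrable_const 1
    | succ k ih =>
        have hprod : Integrable (fun ω => f k ω * exp (Y (k + 1) ω)) μ :=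
          (hIndepFk k).integrable_mul ih (hexp_int (k + 1))
        refine Integrable.mono' (hprod.add (integrable_const 1))
          ((hfadapt (k + 1)).mono (𝒢.le _)).aestronglyMeasurable
          (Filter.Eventually.of_forall fun ω => ?_)
        rw [Real.norm_eq_abs, hfrec k ω,
          abs_of_nonneg (le_trans zero_le_one (le_max_right _ _))]
        have h1 : 0 ≤ f k ω * exp (Y (k + 1) ω) :=
          mul_nonneg (hfpos k ω).le (Real.exp_pos _).le
        simp only [Pi.add_apply]
        exact max_le (by linarith) (by linarith)
  have hprodint : ∀ k, Integrable (fun ω => f k ω * exp (Y (k + 1) ω)) μ := fun k =>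
    (hIndepFk k).integrable_mul (hfint k) (hexp_int (k + 1))
  -- conditional expectation of exp (Y (k+1)) given 𝒢 k is 1
  have hcond1 : ∀ k, μ[(fun ω => exp (Y (k + 1) ω)) | 𝒢 k] =ᵐ[μ] fun _ => (1 : ℝ) := by
    intro k
    have hsm : StronglyMeasurable[MeasurableSpace.comap (Y (k + 1)) Real.measurableSpace]
        (fun ω => exp (Y (k + 1) ω)) :=
      ((Measurable.of_comap_le le_rfl).exp).stronglyMeasurable
    have hie := condExp_indep_eq (hmeas (k + 1)).comap_le (𝒢.le k) hsm ((hIndep k).symm)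
    filter_upwards [hie] with ω hω
    rw [hω]; exact hexp_one (k + 1)
  -- f is a submartingale
  have hsub : Submartingale f 𝒢 μ := by
    refine submartingale_nat hfadapt hfint fun k => ?_
    have hle : (fun ω => f k ω * exp (Y (k + 1) ω)) ≤ᵐ[μ] f (k + 1) :=
      Filter.Eventually.of_forall fun ω => by rw [hfrec k ω]; exact le_max_left _ _
    have h1 : μ[(fun ω => f k ω * exp (Y (k + 1) ω)) | 𝒢 k] ≤ᵐ[μ] μ[f (k + 1) | 𝒢 k] :=
      condExp_mono (hprodint k) (hfint (k + 1)) hle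
    have h2 : μ[f k * (fun ω => exp (Y (k + 1) ω)) | 𝒢 k]
        =ᵐ[μ] f k * μ[(fun ω => exp (Y (k + 1) ω)) | 𝒢 k] :=
      condExp_mul_of_stronglyMeasurable_left (hfadapt k) (hprodint k) (hexp_int (k + 1))
    filter_upwards [h1, h2, hcond1 k] with ω h1ω h2ω h3ω
    have : f k ω = (f k * μ[(fun ω => exp (Y (k + 1) ω)) | 𝒢 k]) ω := by
      simp only [Pi.mul_apply, h3ω, mul_one]
    rw [this, ← h2ω]
    exact h1ω
  -- compensator bound on the mean of f k
  have hmean : ∀ k : ℕ, μ[f k] ≤ 1 + (k : ℝ) * c := by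
    intro k; induction k with
    | zero => rw [hf0]; simp
    | succ k ih =>
        have hg1m : Measurable fun ω => max (1 - f k ω * exp (Y (k + 1) ω)) 0 := by
          have : Measurable (f k) := (hWmeas k).exp
          exact (measurable_const.sub (this.mul (hmeas (k + 1)).exp)).max measurable_const
        have hg1 : Integrable (fun ω => max (1 - f k ω * exp (Y (k + 1) ω)) 0) μ := by
          refine Integrable.mono' (integrable_const 1) hg1m.aestronglyMeasurable
            (Filter.Eventually.of_forall fun ω => ?_)
          rw [Real.norm_eq_abs, abs_of_nonneg (le_max_right _ _)]
          have h1 : 0 ≤ f k ω * exp (Y (k + 1) ω) :=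
            mul_nonneg (hfpos k ω).le (Real.exp_pos _).le
          exact max_le (by linarith) zero_le_one
        have hsplit : f (k + 1) = fun ω =>
            f k ω * exp (Y (k + 1) ω) + max (1 - f k ω * exp (Y (k + 1) ω)) 0 := by
          funext ω
          rw [hfrec k ω]
          rcases le_total (f k ω * exp (Y (k + 1) ω)) 1 with hle | hle
          · rw [max_eq_right hle, max_eq_left (by linarith)]; ring
          · rw [max_eq_left hle, max_eq_right (by linarith)]; ring
        have hmono : (∫ ω, max (1 - f k ω * exp (Y (k + 1) ω)) 0 ∂μ)
            ≤ ∫ ω, max (1 - exp (Y (k + 1) ω)) 0 ∂μ := by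
          refine integral_mono hg1 (hgint (k + 1)) fun ω => ?_
          have h1 : exp (Y (k + 1) ω) ≤ f k ω * exp (Y (k + 1) ω) :=
            le_mul_of_one_le_left (Real.exp_pos _).le (hfone k ω)
          exact max_le_max (by linarith) le_rfl
        have hEprod : (∫ ω, f k ω * exp (Y (k + 1) ω) ∂μ) = μ[f k] := by
          have := (hIndepFk k).integral_mul_eq_mul_integral (hfint k).aestronglyMeasurable
              (hexp_int (k + 1)).aestronglyMeasurable
          calc (∫ ω, f k ω * exp (Y (k + 1) ω) ∂μ)
              = ∫ ω, (f k * fun ω => exp (Y (k + 1) ω)) ω ∂μ := rfl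
            _ = μ[f k] * ∫ ω, exp (Y (k + 1) ω) ∂μ := this
            _ = μ[f k] := by rw [hexp_one (k + 1), mul_one]
        have : μ[f (k + 1)] = μ[f k] + ∫ ω, max (1 - f k ω * exp (Y (k + 1) ω)) 0 ∂μ := by
          rw [hsplit, integral_add (hprodint k) hg1, hEprod]
        rw [this]
        rw [hgc k] at hmono
        push_cast
        linarith
  -- Doob's maximal inequality
  set ε : NNReal := (exp h).toNNReal with hε
  have hεcoe : (ε : ℝ) = exp h := Real.coe_toNNReal _ (Real.exp_pos h).le
  have hfnonneg : 0 ≤ f := fun k ω => (hfpos k ω).le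
  have hdoob := maximal_ineq hsub hfnonneg (ε := ε) n
  -- the two maximal sets coincide
  have hsupeq : ∀ ω, (Finset.range (n + 1)).sup' Finset.nonempty_range_add_one (fun k => f k ω)
      = exp ((Finset.range (n + 1)).sup' Finset.nonempty_range_add_one (fun k => W k ω)) := by
    intro ω
    exact (Finset.comp_sup'_eq_sup'_comp _ exp fun x y => Real.exp_monotone.map_max).symm
  have hseteq : {ω | (ε : ℝ) ≤ (Finset.range (n + 1)).sup' Finset.nonempty_range_add_one
        (fun k => f k ω)}
      = {ω | h ≤ (Finset.range (n + 1)).sup' Finset.nonempty_range_add_one (fun k => W k ω)} := by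
    ext ω
    simp only [Set.mem_setOf_eq, hεcoe, hsupeq ω, Real.exp_le_exp]
  rw [hseteq] at hdoob
  have hIle : (∫ ω in {ω | h ≤ (Finset.range (n + 1)).sup' Finset.nonempty_range_add_one
        (fun k => W k ω)}, f n ω ∂μ) ≤ μ[f n] :=
    setIntegral_le_integral (hfint n) (Filter.Eventually.of_forall fun ω => (hfpos n ω).le)
  have hbound : (ε : ENNReal) * μ {ω | h ≤ (Finset.range (n + 1)).sup'
        Finset.nonempty_range_add_one (fun k => W k ω)}
      ≤ ENNReal.ofReal (1 + (n : ℝ) * c) := by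
    refine le_trans hdoob ?_
    exact ENNReal.ofReal_le_ofReal (le_trans hIle (hmean n))
  have hεne : (ε : ENNReal) ≠ 0 := by
    simp only [ne_eq, ENNReal.coe_eq_zero]
    exact (Real.toNNReal_pos.mpr (Real.exp_pos h)).ne'
  have hmain : μ {ω | h ≤ (Finset.range (n + 1)).sup' Finset.nonempty_range_add_one
        (fun k => W k ω)}
      ≤ ENNReal.ofReal (exp (-h) * (1 + (n : ℝ) * c)) := by
    have hdiv : μ {ω | h ≤ (Finset.range (n + 1)).sup' Finset.nonempty_range_add_one
          (fun k => W k ω)}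
        ≤ ENNReal.ofReal (1 + (n : ℝ) * c) / (ε : ENNReal) := by
      rw [ENNReal.le_div_iff_mul_le (Or.inl hεne) (Or.inl ENNReal.coe_ne_top)]
      rw [mul_comm]; exact hbound
    refine le_trans hdiv (le_of_eq ?_)
    have hcoe : (ε : ENNReal) = ENNReal.ofReal (exp h) := rfl
    rw [hcoe, ← ENNReal.ofReal_div_of_pos (Real.exp_pos h)]
    congr 1
    rw [div_eq_mul_inv, ← Real.exp_neg, mul_comm]
  rcases le_total (exp (-h) * (1 + (n : ℝ) * c)) 1 with hm | hm
  · rw [min_eq_left hm]; exact hmain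
  · rw [min_eq_right hm, ENNReal.ofReal_one]; exact prob_le_one
end

section
/- If E[Y] < 0 and the moment generating function of Y exists in a neighborhood of 0, then the partial sums S_n = Y_1 + ... + Y_n of i.i.d. copies of Y satisfy P(S_n < 0) → 1 and E[e^{S_n}·1_{S_n < 0}] → 0 as n → ∞; consequently, if additionally E[e^Y] = 1, then E[e^{S_n^+}] → 2 as n → ∞. -/
open MeasureTheory ProbabilityTheory Real Filter Finset

/-- If `E Y < 0` and the MGF of `Y` exists in a neighborhood of `0`, then the
partial sums `S_n` of i.i.d. copies of `Y` satisfy `P(S_n < 0) → 1` and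
`E[e^{S_n}·1_{S_n < 0}] → 0`; consequently, if additionally `E e^Y = 1`
(and `e^{S_n⁺}` is integrable), then `E e^{S_n⁺} → 2`. -/
theorem exp_rectified_sum_tendsto_two
    {Ω : Type*} [MeasurableSpace Ω] (μ : Measure Ω) [IsProbabilityMeasure μ]
    (Y : ℕ → Ω → ℝ) (hmeas : ∀ i, Measurable (Y i))
    (hindep : iIndepFun Y μ)
    (hident : ∀ i, Measure.map (Y i) μ = Measure.map (Y 0) μ)
    (hint : ∀ i, Integrable (Y i) μ)
    (hmean : ∫ ω, Y 0 ω ∂μ < 0)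
    (hmgf : ∃ δ > (0 : ℝ), ∀ l : ℝ, |l| ≤ δ →
      Integrable (fun ω => exp (l * Y 0 ω)) μ)
    (S : ℕ → Ω → ℝ) (hS : ∀ n ω, S n ω = ∑ i ∈ Finset.range n, Y i ω) :
    Tendsto (fun n => (μ {ω | S n ω < 0}).toReal) atTop (nhds 1) ∧
    Tendsto (fun n => ∫ ω in {ω | S n ω < 0}, exp (S n ω) ∂μ) atTop (nhds 0) ∧
    ((∫ ω, exp (Y 0 ω) ∂μ = 1) →
      (∀ n, Integrable (fun ω => exp (max (S n ω) 0)) μ) →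
      Tendsto (fun n => ∫ ω, exp (max (S n ω) 0) ∂μ) atTop (nhds 2)) := by
  have hSmeas : ∀ n, Measurable (S n) := by
    intro n
    have : S n = fun ω => ∑ i ∈ Finset.range n, Y i ω := funext (hS n)
    rw [this]
    exact Finset.measurable_sum _ fun i _ => hmeas i
  have hsetmeas : ∀ n, MeasurableSet {ω | S n ω < 0} := fun n =>
    measurableSet_lt (hSmeas n) measurable_const
  have hident' : ∀ i, IdentDistrib (Y i) (Y 0) μ μ := fun i =>
    ⟨(hmeas i).aemeasurable, (hmeas 0).aemeasurable, hident i⟩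
  have hpair : Pairwise (Function.onFun (IndepFun · · μ) Y) := fun i j hij =>
    hindep.indepFun hij
  -- strong law: S n ω → -∞ a.e.
  have hslln := strong_law_ae_real Y (hint 0) hpair hident'
  set m : ℝ := ∫ ω, Y 0 ω ∂μ with hm
  have hae : ∀ᵐ ω ∂μ, Tendsto (fun n => S n ω) atTop atBot := by
    filter_upwards [hslln] with ω hω
    have hlin : Tendsto (fun n : ℕ => (n : ℝ) * (m / 2)) atTop atBot :=
      tendsto_natCast_atTop_atTop.atTop_mul_const_of_neg (by linarith)
    apply tendsto_atBot_mono' _ _ hlin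
    have h1 : ∀ᶠ n : ℕ in atTop, (∑ i ∈ Finset.range n, Y i ω) / n < m / 2 :=
      hω.eventually (Filter.Tendsto.eventually_lt_const (by linarith) tendsto_id)
    filter_upwards [h1, eventually_gt_atTop 0] with n hn hn0
    rw [hS]
    have hnpos : (0 : ℝ) < n := Nat.cast_pos.mpr hn0
    calc (∑ i ∈ Finset.range n, Y i ω)
        = ((∑ i ∈ Finset.range n, Y i ω) / n) * n := by field_simp
      _ ≤ (m / 2) * n := by nlinarith [(div_lt_iff₀ hnpos).mp hn]
      _ = (n : ℝ) * (m / 2) := by ring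
  have haev : ∀ᵐ ω ∂μ, ∀ᶠ n in atTop, S n ω < 0 := by
    filter_upwards [hae] with ω hω
    exact hω.eventually (eventually_lt_atBot 0)
  -- Part 1
  have part1 : Tendsto (fun n => (μ {ω | S n ω < 0}).toReal) atTop (nhds 1) := by
    have heq : ∀ n, (μ {ω | S n ω < 0}).toReal
        = ∫ ω, Set.indicator {ω | S n ω < 0} (fun _ => (1 : ℝ)) ω ∂μ := by
      intro n
      rw [integral_indicator_const (1 : ℝ) (hsetmeas n), smul_eq_mul, mul_one, measureReal_def]
    simp_rw [heq]
    have h1 : (1 : ℝ) = ∫ _, (1 : ℝ) ∂μ := by simp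
    rw [h1]
    apply tendsto_integral_of_dominated_convergence (fun _ => (1 : ℝ))
    · intro n
      exact ((measurable_const.indicator (hsetmeas n))).aestronglyMeasurable
    · exact integrable_const 1
    · intro n
      filter_upwards with ω
      by_cases h : ω ∈ {ω | S n ω < 0} <;>
        simp [Set.indicator_apply, h]
    · filter_upwards [haev] with ω hω
      apply Tendsto.congr' _ tendsto_const_nhds
      filter_upwards [hω] with n hn
      simp [Set.indicator_apply, hn]
  -- Part 2
  have part2 : Tendsto (fun n => ∫ ω in {ω | S n ω < 0}, exp (S n ω) ∂μ) atTop (nhds 0) := by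
    have heq : ∀ n, ∫ ω in {ω | S n ω < 0}, exp (S n ω) ∂μ
        = ∫ ω, Set.indicator {ω | S n ω < 0} (fun ω => exp (S n ω)) ω ∂μ := by
      intro n; rw [integral_indicator (hsetmeas n)]
    simp_rw [heq]
    rw [show nhds (0 : ℝ) = nhds (∫ (_ : Ω), (0 : ℝ) ∂μ) by simp]
    apply tendsto_integral_of_dominated_convergence (fun _ => (1 : ℝ))
    · intro n
      exact (((hSmeas n).exp).indicator (hsetmeas n)).aestronglyMeasurable
    · exact integrable_const 1
    · intro n
      filter_upwards with ω
      by_cases h : ω ∈ {ω | S n ω < 0}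
      · rw [Set.indicator_of_mem h]
        rw [Real.norm_eq_abs, abs_of_pos (exp_pos _)]
        exact exp_le_one_iff.mpr (le_of_lt h)
      · simp [Set.indicator_of_notMem h]
    · filter_upwards [hae, haev] with ω hω hω'
      have hexp : Tendsto (fun n => exp (S n ω)) atTop (nhds 0) :=
        Real.tendsto_exp_atBot.comp hω
      apply Tendsto.congr' _ hexp
      filter_upwards [hω'] with n hn
      simp [Set.indicator_apply, Set.mem_setOf_eq, hn]
  refine ⟨part1, part2, fun hE hintS => ?_⟩
  -- Part 3
  have hintExp0 : Integrable (fun ω => exp (Y 0 ω)) μ := by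
    by_contra h
    rw [integral_undef h] at hE
    norm_num at hE
  have hintExp : ∀ i, Integrable (fun ω => exp (Y i ω)) μ := by
    intro i
    have := (hident' i).comp measurable_exp
    exact this.integrable_iff.mpr hintExp0
  have hmgf1 : ∀ i, mgf (Y i) μ 1 = 1 := by
    intro i
    have h1 : mgf (Y i) μ 1 = ∫ ω, exp (Y i ω) ∂μ := by
      unfold mgf
      simp
    have h2 := ((hident' i).comp measurable_exp).integral_eq
    simp only [Function.comp] at h2
    rw [h1, h2, hE]
  have hintSexp : ∀ n, Integrable (fun ω => exp (S n ω)) μ := by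
    intro n
    have := hindep.integrable_exp_mul_sum (t := 1) hmeas
      (s := Finset.range n) (fun i _ => by simpa using hintExp i)
    simp only [Finset.sum_apply, one_mul] at this
    apply this.congr
    filter_upwards with ω
    rw [hS]
  have hSint1 : ∀ n, ∫ ω, exp (S n ω) ∂μ = 1 := by
    intro n
    have := hindep.mgf_sum (t := 1) hmeas (Finset.range n)
    simp only [hmgf1, Finset.prod_const_one] at this
    have h2 : mgf (∑ i ∈ Finset.range n, Y i) μ 1 = ∫ ω, exp (S n ω) ∂μ := by
      unfold mgf
      congr 1
      funext ω
      simp [hS]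
    rw [← h2, this]
  -- decomposition
  have hdecomp : ∀ n, ∫ ω, exp (max (S n ω) 0) ∂μ
      = 1 + ((μ {ω | S n ω < 0}).toReal - ∫ ω in {ω | S n ω < 0}, exp (S n ω) ∂μ) := by
    intro n
    have hind1 : Integrable (Set.indicator {ω | S n ω < 0} (fun _ => (1 : ℝ))) μ :=
      (integrable_const (1 : ℝ)).indicator (hsetmeas n)
    have hind2 : Integrable (Set.indicator {ω | S n ω < 0} (fun ω => exp (S n ω))) μ :=
      (hintSexp n).indicator (hsetmeas n)
    have hptw : ∀ ω, exp (max (S n ω) 0)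
        = exp (S n ω) + (Set.indicator {ω | S n ω < 0} (fun _ => (1 : ℝ)) ω
          - Set.indicator {ω | S n ω < 0} (fun ω => exp (S n ω)) ω) := by
      intro ω
      by_cases h : S n ω < 0
      · simp only [Set.indicator_apply, Set.mem_setOf_eq, if_pos h,
          max_eq_right h.le]
        simp
      · simp only [Set.indicator_apply, Set.mem_setOf_eq, if_neg h,
          max_eq_left (not_lt.mp h)]
        ring
    calc ∫ ω, exp (max (S n ω) 0) ∂μ
        = ∫ ω, (exp (S n ω) + (Set.indicator {ω | S n ω < 0} (fun _ => (1 : ℝ)) ω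
          - Set.indicator {ω | S n ω < 0} (fun ω => exp (S n ω)) ω)) ∂μ := by
          exact integral_congr_ae (Filter.Eventually.of_forall hptw)
      _ = (∫ ω, exp (S n ω) ∂μ)
          + ((∫ ω, Set.indicator {ω | S n ω < 0} (fun _ => (1 : ℝ)) ω ∂μ)
            - ∫ ω, Set.indicator {ω | S n ω < 0} (fun ω => exp (S n ω)) ω ∂μ) := by
          have hsub : Integrable (fun ω => Set.indicator {ω | S n ω < 0} (fun _ => (1 : ℝ)) ω
              - Set.indicator {ω | S n ω < 0} (fun ω => exp (S n ω)) ω) μ := hind1.sub hind2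
          rw [integral_add (hintSexp n) hsub, integral_sub hind1 hind2]
      _ = 1 + ((μ {ω | S n ω < 0}).toReal - ∫ ω in {ω | S n ω < 0}, exp (S n ω) ∂μ) := by
          rw [hSint1 n, integral_indicator_const (1 : ℝ) (hsetmeas n),
            integral_indicator (hsetmeas n), smul_eq_mul, mul_one, measureReal_def]
  simp_rw [hdecomp]
  have : (2 : ℝ) = 1 + (1 - 0) := by norm_num
  rw [this]
  exact tendsto_const_nhds.add (part1.sub part2)
end

section
/- The first-order differences of rescaled Bell polynomials satisfy Δ_{n+1}^{(1)} = B̃_{n+1}(x_1,...,x_{n+1}) − B̃_n(x_1,...,x_n) = (1/(n+1)) Σ_{k=0}^{n} Δ_{n−k}^{(1)}·(x_{k+1} − 1), with Δ_0^{(1)} = B̃_0 = 1; more generally, the r-th order difference of B̃_n(x_1,...,x_n) equals B̃_n(x_1 − r, ..., x_n − r). -/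
/-!
The recursion says `n B̃_n = ∑_{k<n} B̃_k x_{n-k}`, i.e. `t B'(t) = B(t) X(t)` for the generating
functions, so `B(t) = exp (∑ x_k t^k / k)`. Replacing every `x_k` by `x_k - 1` multiplies `B` by
`exp (-∑ t^k / k) = 1 - t`, which on coefficients is the backward difference `B̃_n - B̃_{n-1}`.
Coefficientwise: the backward differences of `B̃(x)` satisfy the recursion for `x - 1`, and a
solution of the recursion is determined by its initial value. Iterating `r` times gives the claim.
-/

open Finset

/-- `b n - b (n - 1)`, with the convention `b (-1) = 0`. -/
def backDiff {M : Type*} [AddCommGroup M] (b : ℕ → M) : ℕ → M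
  | 0 => b 0
  | n + 1 => b (n + 1) - b n

theorem sum_range_succ_backDiff {M : Type*} [AddCommGroup M] (b : ℕ → M) (n : ℕ) :
    ∑ k ∈ range (n + 1), backDiff b k = b n := by
  induction n with
  | zero => simp [backDiff]
  | succ n ih => rw [sum_range_succ, ih, backDiff, add_sub_cancel]

theorem sum_range_succ_backDiff_mul {R : Type*} [CommRing R] (b y : ℕ → R) (n : ℕ) :
    ∑ k ∈ range (n + 1), backDiff b k * y (n + 1 - k) =
      ∑ k ∈ range (n + 1), b k * y (n + 1 - k) - ∑ k ∈ range n, b k * y (n - k) := by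
  simp only [sum_range_succ' _ n, backDiff, Nat.add_sub_add_right, sub_mul, sum_sub_distrib]
  ring

/-- `b n = B̃_n(y_1, …, y_n)` for all `n`; `y 0` is never used. -/
def IsRescaledBellSeq {K : Type*} [Field K] (y b : ℕ → K) : Prop :=
  b 0 = 1 ∧ ∀ n : ℕ, (n : K) * b n = ∑ k ∈ range n, b k * y (n - k)

namespace IsRescaledBellSeq

variable {K : Type*} [Field K] [CharZero K]

theorem of_rec {y b : ℕ → K} (h0 : b 0 = 1)
    (hrec : ∀ n, b (n + 1) = (1 / (n + 1 : K)) * ∑ k ∈ range (n + 1), b k * y (n - k + 1)) :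
    IsRescaledBellSeq y b := by
  refine ⟨h0, fun n => ?_⟩
  cases n with
  | zero => simp
  | succ n =>
    rw [hrec n, ← mul_assoc, Nat.cast_add_one, mul_one_div_cancel (Nat.cast_add_one_ne_zero n),
      one_mul]
    refine sum_congr rfl fun k hk => ?_
    rw [Nat.sub_add_comm (Nat.le_of_lt_succ (mem_range.mp hk))]

theorem unique {y b c : ℕ → K} (hb : IsRescaledBellSeq y b) (hc : IsRescaledBellSeq y c) :
    b = c := by
  funext n
  induction n using Nat.strong_induction_on with
  | _ n ih =>
    cases n with
    | zero => rw [hb.1, hc.1]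
    | succ n =>
      refine mul_left_cancel₀ (Nat.cast_add_one_ne_zero n) ?_
      rw [← Nat.cast_add_one, hb.2, hc.2]
      exact sum_congr rfl fun k hk => by rw [ih k (mem_range.mp hk)]

theorem sub_one {y b : ℕ → K} (hb : IsRescaledBellSeq y b) :
    IsRescaledBellSeq (fun i => y i - 1) (backDiff b) := by
  refine ⟨hb.1, fun n => ?_⟩
  cases n with
  | zero => simp
  | succ n =>
    calc ((n + 1 : ℕ) : K) * backDiff b (n + 1)
        = ((n + 1 : ℕ) : K) * b (n + 1) - n * b n - b n := by
          rw [backDiff]; push_cast; ring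
      _ = ∑ k ∈ range (n + 1), backDiff b k * (y (n + 1 - k) - 1) := by
          simp only [mul_sub_one, sum_sub_distrib]
          rw [hb.2, hb.2, sum_range_succ_backDiff_mul, sum_range_succ_backDiff]

end IsRescaledBellSeq

/-- Differences of rescaled Bell polynomials. With `B̃_0 = 1`,
`B̃_{n+1}(x) = (1/(n+1)) ∑_{k=0}^n B̃_k(x) x_{n-k+1}`, and the `r`-th order
difference `Δ` defined by `Δ_n^{(0)} = B̃_n`, `Δ_0^{(r)} = B̃_0 = 1`,
`Δ_n^{(r)} = Δ_n^{(r-1)} - Δ_{n-1}^{(r-1)}` for `n ≥ 1`, the first-order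
differences satisfy
`Δ_{n+1}^{(1)} = (1/(n+1)) ∑_{k=0}^n Δ_{n-k}^{(1)} (x_{k+1} - 1)`, and in
general `Δ_n^{(r)}(x_1,…,x_n) = B̃_n(x_1 - r, …, x_n - r)`. -/
theorem rescaledBell_differences
    (Bt : (ℕ → ℝ) → ℕ → ℝ)
    (hBt0 : ∀ x, Bt x 0 = 1)
    (hBtrec : ∀ x n, Bt x (n + 1) =
      (1 / (n + 1 : ℝ)) * ∑ k ∈ Finset.range (n + 1), Bt x k * x (n - k + 1))
    (D : (ℕ → ℝ) → ℕ → ℕ → ℝ)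
    (hD0 : ∀ x n, D x 0 n = Bt x n)
    (hDzero : ∀ x r, D x (r + 1) 0 = 1)
    (hDrec : ∀ x r n, D x (r + 1) (n + 1) = D x r (n + 1) - D x r n)
    (x : ℕ → ℝ) :
    (∀ n, D x 1 (n + 1) =
      (1 / (n + 1 : ℝ)) * ∑ k ∈ Finset.range (n + 1),
        D x 1 (n - k) * (x (k + 1) - 1)) ∧
    (∀ r n, D x r n = Bt (fun i => x i - r) n) := by
  have hBell : ∀ y, IsRescaledBellSeq y (Bt y) := fun y => .of_rec (hBt0 y) (hBtrec y)
  have hD : ∀ r n, D x r n = Bt (fun i => x i - r) n := by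
    intro r
    induction r with
    | zero => simpa using hD0 x
    | succ r ih =>
      intro n
      have hstep : D x (r + 1) = backDiff (Bt fun i => x i - r) := by
        funext m
        cases m with
        | zero => rw [hDzero, backDiff, hBt0]
        | succ m => rw [hDrec, backDiff, ih, ih]
      have hshift : (fun i => x i - ((r + 1 : ℕ) : ℝ)) = fun i => x i - r - 1 := by
        funext i; push_cast; ring
      rw [hstep, hshift, (hBell _).sub_one.unique (hBell _)]
  refine ⟨fun n => ?_, hD⟩
  simp only [hD 1, Nat.cast_one]
  rw [hBtrec, ← sum_range_reflect]
  refine congrArg _ (sum_congr rfl fun k hk => ?_)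
  have hk : k ≤ n := Nat.le_of_lt_succ (mem_range.mp hk)
  rw [Nat.add_sub_cancel, Nat.sub_sub_self hk]
end
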